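/- arXiv:1301.6312 — 7 statements merged into one kernel-verified Lean document; each statement's English description precedes it below -/
import Mathlib

section
/- For two neighboring nodes u and v in a tree with n nodes, the rumor centralities satisfy R(u) = R(v) · |T_u^v| / (n − |T_u^v|), where T_u^v is the subtree rooted at u when the tree is rooted at v. -/
/-- `subtreeSet G u v` is the set of vertices `w` such that every walk from `v` to `w`
passes through `u`; in a tree this is the subtree `T_u^v` rooted at `u` when the tree is
rooted at `v`. -/
def subtreeSet {V : Type*} (G : SimpleGraph V) (u v : V) : Set V :=
  {w | ∀ p : G.Walk v w, u ∈ p.support}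

/-- Rumor centrality `R(s, G_n) = n! · ∏_{u} 1 / |T_u^s|`. -/
noncomputable def rumorCentrality {V : Type*} [Fintype V] (G : SimpleGraph V) (s : V) : ℚ :=
  (Nat.factorial (Fintype.card V) : ℚ) * ∏ u : V, 1 / ((subtreeSet G u s).ncard : ℚ)

/-!
Re-rooting from `v` at the neighbour `u` changes only two subtrees: `T_u` grows from `T_u^v`
to the whole vertex set and `T_v` shrinks from the whole vertex set to `T_v^u`, while
`T_w^u = T_w^v` for every other `w` (prepend the edge `uv` to a walk, in either direction).
Hence `R(u) · |T_v^u| = R(v) · |T_u^v|` in any finite graph. In a tree `T_v^u` is the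
complement of `T_u^v`, because the unique path from a vertex to `u` passes through `v` exactly
when the one to `v` avoids `u`; so `|T_v^u| = n - |T_u^v|`.
-/

section subtreeSet

variable {V : Type*} {G : SimpleGraph V}

theorem mem_subtreeSet_self (u v : V) : u ∈ subtreeSet G u v :=
  fun p => p.end_mem_support

theorem subtreeSet_self (s : V) : subtreeSet G s s = Set.univ :=
  Set.eq_univ_of_forall fun _ p => p.start_mem_support

theorem ncard_subtreeSet_pos [Finite V] (u v : V) : 0 < (subtreeSet G u v).ncard :=
  (Set.ncard_pos).2 ⟨u, mem_subtreeSet_self u v⟩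

theorem subtreeSet_subset_of_adj {u v w : V} (huv : G.Adj u v) (hwu : w ≠ u) :
    subtreeSet G w u ⊆ subtreeSet G w v := by
  intro x hx p
  have hw := hx (.cons huv p)
  rw [SimpleGraph.Walk.support_cons, List.mem_cons] at hw
  exact hw.resolve_left hwu

theorem subtreeSet_eq_of_adj {u v w : V} (huv : G.Adj u v) (hwu : w ≠ u) (hwv : w ≠ v) :
    subtreeSet G w u = subtreeSet G w v :=
  (subtreeSet_subset_of_adj huv hwu).antisymm (subtreeSet_subset_of_adj huv.symm hwv)

theorem SimpleGraph.IsAcyclic.mem_subtreeSet_iff (hG : G.IsAcyclic) {u v x : V}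
    {p : G.Walk x v} (hp : p.IsPath) : x ∈ subtreeSet G u v ↔ u ∈ p.support := by
  classical
  refine ⟨fun hx => by simpa using hx p.reverse, fun hu q => ?_⟩
  have hq : (q.toPath : G.Walk v x).reverse = p :=
    congrArg Subtype.val ((hG.subsingleton_path x v).elim ⟨_, q.toPath.2.reverse⟩ ⟨p, hp⟩)
  apply q.support_toPath_subset_support
  simpa [← hq] using hu

theorem SimpleGraph.IsTree.compl_subtreeSet (hG : G.IsTree) {u v : V} (huv : G.Adj u v) :
    (subtreeSet G u v)ᶜ = subtreeSet G v u := by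
  have hG' := hG.isAcyclic
  ext x
  obtain ⟨p, hp⟩ := (hG.connected x u).exists_isPath
  obtain ⟨q, hq⟩ := (hG.connected x v).exists_isPath
  rw [Set.mem_compl_iff, hG'.mem_subtreeSet_iff hq, hG'.mem_subtreeSet_iff hp]
  exact ⟨hG'.mem_support_of_ne_mem_support_of_adj_of_isPath hp hq huv,
    hG'.ne_mem_support_of_support_of_adj_of_isPath hp hq huv⟩

theorem SimpleGraph.IsTree.ncard_subtreeSet_add_ncard_subtreeSet [Finite V] (hG : G.IsTree)
    {u v : V} (huv : G.Adj u v) :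
    (subtreeSet G u v).ncard + (subtreeSet G v u).ncard = Nat.card V := by
  rw [← hG.compl_subtreeSet huv, Set.ncard_add_ncard_compl]

end subtreeSet

theorem rumorCentrality_mul_ncard_subtreeSet_of_adj {V : Type*} [Fintype V]
    {G : SimpleGraph V} {u v : V} (huv : G.Adj u v) :
    rumorCentrality G u * (subtreeSet G v u).ncard =
      rumorCentrality G v * (subtreeSet G u v).ncard := by
  classical
  have hrest : ∏ w ∈ {u, v}ᶜ, 1 / ((subtreeSet G w u).ncard : ℚ) =
      ∏ w ∈ {u, v}ᶜ, 1 / ((subtreeSet G w v).ncard : ℚ) := by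
    refine Finset.prod_congr rfl fun w hw => ?_
    simp only [Finset.mem_compl, Finset.mem_insert, Finset.mem_singleton, not_or] at hw
    rw [subtreeSet_eq_of_adj huv hw.1 hw.2]
  have hu : ((subtreeSet G u v).ncard : ℚ) ≠ 0 := by
    exact_mod_cast (ncard_subtreeSet_pos u v).ne'
  have hv : ((subtreeSet G v u).ncard : ℚ) ≠ 0 := by
    exact_mod_cast (ncard_subtreeSet_pos v u).ne'
  simp only [rumorCentrality, ← Finset.prod_mul_prod_compl {u, v}, Finset.prod_pair huv.ne,
    hrest, subtreeSet_self, Set.ncard_univ]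
  field_simp

/-- For two neighboring nodes `u` and `v` in a tree on `n` nodes,
`R(u) = R(v) · |T_u^v| / (n − |T_u^v|)`. -/
theorem rumorCentrality_adj {V : Type*} [Fintype V] (G : SimpleGraph V) (hG : G.IsTree)
    (u v : V) (huv : G.Adj u v) :
    rumorCentrality G u =
      rumorCentrality G v * ((subtreeSet G u v).ncard : ℚ) /
        ((Fintype.card V : ℚ) - ((subtreeSet G u v).ncard : ℚ)) := by
  have hsum := hG.ncard_subtreeSet_add_ncard_subtreeSet huv
  rw [Nat.card_eq_fintype_card] at hsum
  have hcompl : (Fintype.card V : ℚ) - (subtreeSet G u v).ncard = (subtreeSet G v u).ncard := by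
    rw [← hsum]; push_cast; ring
  rw [hcompl, ← rumorCentrality_mul_ncard_subtreeSet_of_adj huv,
    mul_div_cancel_right₀ _ (by exact_mod_cast (ncard_subtreeSet_pos v u).ne')]
end

section
/- For a node ω in a tree G_n on n nodes and a neighbor u of ω, R(u, G_n) = R(ω, G_n) if and only if |T_u^ω| = n/2. Consequently, if ω satisfies |T_v^ω| ≤ n/2 for all neighbors v in a set N_l(ω), there is at most one u ∈ N_l(ω) with R(u, G_n) = R(ω, G_n). -/
namespace SimpleGraph

open Walk

variable {V : Type*} {G : SimpleGraph V} {s u u₁ u₂ v w ω : V}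

lemma mem_subtreeSet_self (v s : V) : v ∈ subtreeSet G v s :=
  fun p => p.end_mem_support

lemma subtreeSet_self (s : V) : subtreeSet G s s = Set.univ :=
  Set.eq_univ_of_forall fun _ p => p.start_mem_support

lemma root_notMem_subtreeSet (h : u ≠ ω) : ω ∉ subtreeSet G u ω :=
  fun hω => h (by simpa using hω Walk.nil)

lemma subtreeSet_subset_subtreeSet_of_adj (h : G.Adj ω u) (hv : v ≠ ω) :
    subtreeSet G v ω ⊆ subtreeSet G v u :=
  fun _ hw q => by simpa [hv] using hw (q.cons h)

lemma subtreeSet_eq_subtreeSet_of_adj (h : G.Adj ω u) (hvω : v ≠ ω) (hvu : v ≠ u) :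
    subtreeSet G v u = subtreeSet G v ω :=
  (subtreeSet_subset_subtreeSet_of_adj h.symm hvu).antisymm
    (subtreeSet_subset_subtreeSet_of_adj h hvω)

lemma dist_lt_dist_of_mem_subtreeSet (hr : G.Reachable s w) (hv : v ≠ s)
    (hw : w ∈ subtreeSet G v s) : G.dist v w < G.dist s w := by
  classical
  obtain ⟨p, hp⟩ := hr.exists_walk_length_eq_dist
  calc G.dist v w ≤ (p.dropUntil v (hw p)).length := dist_le _
    _ < p.length := length_dropUntil_lt_length _ hv
    _ = G.dist s w := hp

lemma Connected.disjoint_subtreeSet_swap (hG : G.Connected) (h : u ≠ ω) :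
    Disjoint (subtreeSet G u ω) (subtreeSet G ω u) :=
  Set.disjoint_left.2 fun w hu hω =>
    (dist_lt_dist_of_mem_subtreeSet (hG ω w) h hu).asymm
      (dist_lt_dist_of_mem_subtreeSet (hG u w) h.symm hω)

lemma Connected.disjoint_subtreeSet_of_adj (hG : G.Connected) (h₁ : G.Adj ω u₁)
    (h₂ : G.Adj ω u₂) (hne : u₁ ≠ u₂) :
    Disjoint (subtreeSet G u₁ ω) (subtreeSet G u₂ ω) :=
  (hG.disjoint_subtreeSet_swap hne).mono (subtreeSet_subset_subtreeSet_of_adj h₂ h₁.ne')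
    (subtreeSet_subset_subtreeSet_of_adj h₁ h₂.ne')

lemma IsAcyclic.mem_subtreeSet_of_isPath (hG : G.IsAcyclic) {p : G.Walk s w} (hp : p.IsPath)
    (hv : v ∈ p.support) : w ∈ subtreeSet G v s := fun q => by
  classical
  have hq : q.bypass = p :=
    congrArg Subtype.val ((hG.subsingleton_path s w).elim ⟨_, q.bypass_isPath⟩ ⟨p, hp⟩)
  exact q.support_bypass_subset_support (hq ▸ hv)

lemma IsAcyclic.subtreeSet_union_subtreeSet_of_adj (hG : G.IsAcyclic) (h : G.Adj ω u) :
    subtreeSet G u ω ∪ subtreeSet G ω u = Set.univ := by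
  classical
  refine Set.eq_univ_of_forall fun w => or_iff_not_imp_left.2 fun hw => ?_
  obtain ⟨p, hu⟩ : ∃ p : G.Walk ω w, u ∉ p.support := by simpa [subtreeSet] using hw
  have hpath : (Walk.cons h.symm p.bypass).IsPath :=
    p.bypass_isPath.cons fun hu' => hu (p.support_bypass_subset_support hu')
  exact hG.mem_subtreeSet_of_isPath hpath (by simp)

section Card

variable [Fintype V]

lemma ncard_subtreeSet_pos (v s : V) : 0 < (subtreeSet G v s).ncard :=
  (Set.ncard_pos (Set.toFinite _)).2 ⟨v, mem_subtreeSet_self v s⟩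

lemma IsTree.ncard_subtreeSet_add_ncard_subtreeSet_of_adj (hG : G.IsTree) (h : G.Adj ω u) :
    (subtreeSet G u ω).ncard + (subtreeSet G ω u).ncard = Fintype.card V := by
  rw [← Set.ncard_union_eq (hG.connected.disjoint_subtreeSet_swap h.ne'),
    hG.isAcyclic.subtreeSet_union_subtreeSet_of_adj h, Set.ncard_univ, Nat.card_eq_fintype_card]

lemma Connected.ncard_subtreeSet_add_ncard_subtreeSet_lt (hG : G.Connected) (h₁ : G.Adj ω u₁)
    (h₂ : G.Adj ω u₂) (hne : u₁ ≠ u₂) :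
    (subtreeSet G u₁ ω).ncard + (subtreeSet G u₂ ω).ncard < Fintype.card V := by
  rw [← Set.ncard_union_eq (hG.disjoint_subtreeSet_of_adj h₁ h₂ hne), ← Nat.card_eq_fintype_card,
    ← Set.ncard_univ]
  refine Set.ncard_lt_ncard (Set.ssubset_univ_iff.2 fun huniv => ?_)
  rcases huniv ▸ Set.mem_univ ω with hω | hω
  · exact root_notMem_subtreeSet h₁.ne' hω
  · exact root_notMem_subtreeSet h₂.ne' hω

lemma rumorCentrality_pos (s : V) : 0 < rumorCentrality G s := by
  refine mul_pos (by positivity) (Finset.prod_pos fun v _ => ?_)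
  have := ncard_subtreeSet_pos (G := G) v s
  positivity

lemma rumorCentrality_mul_ncard_eq_of_adj (h : G.Adj ω u) :
    rumorCentrality G u * (subtreeSet G ω u).ncard =
      rumorCentrality G ω * (subtreeSet G u ω).ncard := by
  classical
  have split : ∀ s, rumorCentrality G s = (Fintype.card V).factorial *
      (1 / ((subtreeSet G u s).ncard : ℚ) * (1 / (subtreeSet G ω s).ncard)) *
      ∏ v ∈ ({u, ω} : Finset V)ᶜ, 1 / ((subtreeSet G v s).ncard : ℚ) := fun s => by
    rw [rumorCentrality, ← Finset.prod_mul_prod_compl {u, ω}, Finset.prod_pair h.ne', ← mul_assoc]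
  have rest : ∏ v ∈ ({u, ω} : Finset V)ᶜ, 1 / ((subtreeSet G v u).ncard : ℚ) =
      ∏ v ∈ ({u, ω} : Finset V)ᶜ, 1 / ((subtreeSet G v ω).ncard : ℚ) :=
    Finset.prod_congr rfl fun v hv => by
      simp only [Finset.mem_compl, Finset.mem_insert, Finset.mem_singleton, not_or] at hv
      rw [subtreeSet_eq_subtreeSet_of_adj h hv.2 hv.1]
  have hu := ncard_subtreeSet_pos (G := G) u ω
  have hω := ncard_subtreeSet_pos (G := G) ω u
  rw [split u, split ω, rest, subtreeSet_self, subtreeSet_self, Set.ncard_univ]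
  field_simp

lemma IsTree.rumorCentrality_eq_iff_of_adj (hG : G.IsTree) (h : G.Adj ω u) :
    rumorCentrality G u = rumorCentrality G ω ↔
      2 * (subtreeSet G u ω).ncard = Fintype.card V := by
  have hsum := hG.ncard_subtreeSet_add_ncard_subtreeSet_of_adj h
  have hratio := rumorCentrality_mul_ncard_eq_of_adj h
  constructor
  · intro heq
    rw [heq] at hratio
    have : (subtreeSet G ω u).ncard = (subtreeSet G u ω).ncard := by
      exact_mod_cast mul_left_cancel₀ (rumorCentrality_pos ω).ne' hratio
    omega
  · intro hhalf
    rw [show (subtreeSet G ω u).ncard = (subtreeSet G u ω).ncard by omega] at hratio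
    have := ncard_subtreeSet_pos (G := G) u ω
    exact mul_right_cancel₀ (by positivity) hratio

end Card

end SimpleGraph

open SimpleGraph in
/-- For a neighbor `u` of `ω`, `R(u, G_n) = R(ω, G_n)` iff `|T_u^ω| = n/2`; consequently,
if all subtrees towards a set `N_l(ω)` of neighbors have size at most `n/2`, there is at
most one `u ∈ N_l(ω)` with `R(u, G_n) = R(ω, G_n)`. -/
theorem tie_iff_half_and_unique {V : Type*} [Fintype V]
    (G : SimpleGraph V) (hG : G.IsTree) (ω : V) (Nl : Finset V)
    (hNl : ∀ v ∈ Nl, G.Adj ω v) :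
    (∀ u ∈ Nl, (rumorCentrality G u = rumorCentrality G ω ↔
        2 * (subtreeSet G u ω).ncard = Fintype.card V)) ∧
    ((∀ v ∈ Nl, 2 * (subtreeSet G v ω).ncard ≤ Fintype.card V) →
      ∀ u₁ ∈ Nl, ∀ u₂ ∈ Nl,
        rumorCentrality G u₁ = rumorCentrality G ω →
        rumorCentrality G u₂ = rumorCentrality G ω → u₁ = u₂) := by
  refine ⟨fun u hu => hG.rumorCentrality_eq_iff_of_adj (hNl u hu),
    fun _ u₁ h₁ u₂ h₂ hR₁ hR₂ => ?_⟩
  by_contra hne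
  have hlt := hG.connected.ncard_subtreeSet_add_ncard_subtreeSet_lt (hNl u₁ h₁) (hNl u₂ h₂) hne
  have hhalf₁ := (hG.rumorCentrality_eq_iff_of_adj (hNl u₁ h₁)).1 hR₁
  have hhalf₂ := (hG.rumorCentrality_eq_iff_of_adj (hNl u₂ h₂)).1 hR₂
  omega
end

section
/- For the δ = 3 case where each composition (x_1, x_2, x_3) of n−1 into three nonnegative parts has probability 2/(n(n+1)), the quantity P_c(n) = Σ_{max x_j < n/2} P + (1/2)Σ_{max x_j = n/2} P equals 1/4 + (3/4)·1/(2⌊n/2⌋ + 1). -/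
/-!
Write `m = n - 1`. Lowering the `i`-th coordinate by `t + 1` identifies the compositions of `m`
with `t < x i` with all compositions of `m - t - 1`, and when `m ≤ 2t + 1` at most one coordinate
can exceed `t`. By stars and bars, the compositions of `m` into three parts with maximum at most
`t` therefore number `C(m + 2, 2) - 3 C(m - t + 1, 2)`. Taking `t = ⌊(n - 1)/2⌋` and `t = ⌊n/2⌋`
counts the compositions with `2 max < n` and with `2 max ≤ n`; together they count each
composition with `2 max < n` twice and each one with `2 max = n` once, so their sum is
`n (n + 1) P_c(n)`.
-/

open Finset

theorem Finset.card_filter_le_eq_card_filter_lt_add_card_filter_eq {α β : Type*} [PartialOrder β]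
    (s : Finset α) (f : α → β) (b : β) [DecidablePred fun x => f x ≤ b]
    [DecidablePred fun x => f x < b] [DecidablePred fun x => f x = b] :
    #{x ∈ s | f x ≤ b} = #{x ∈ s | f x < b} + #{x ∈ s | f x = b} := by
  classical
  rw [← card_union_of_disjoint (disjoint_filter.2 fun _ _ h h' => h.ne h'), ← filter_or]
  simp_rw [le_iff_lt_or_eq]

namespace Finset.Nat

theorem card_antidiagonalTuple (k n : ℕ) :
    #(antidiagonalTuple k n) = (k + n - 1).choose n := by
  have h := card_finsuppAntidiag_nat_eq_choose (s := (univ : Finset (Fin k))) n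
  rw [card_fin] at h
  rw [← h]
  refine card_bij' (fun x _ => Finsupp.equivFunOnFinite.symm x) (fun f _ => f) ?_ ?_ ?_ ?_
  · intro x hx
    simpa [mem_finsuppAntidiag, mem_antidiagonalTuple, Finsupp.sum_fintype] using hx
  · intro f hf
    simpa [mem_finsuppAntidiag, mem_antidiagonalTuple, Finsupp.sum_fintype] using hf
  · intro x _
    rfl
  · intro f _
    exact Finsupp.equivFunOnFinite.symm_apply_apply f

theorem card_filter_lt_apply_antidiagonalTuple_add {k : ℕ} (i : Fin k) (t m : ℕ) :
    #{x ∈ antidiagonalTuple k (m + (t + 1)) | t < x i} = #(antidiagonalTuple k m) := by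
  refine card_bij' (fun x _ => x - Pi.single i (t + 1)) (fun x _ => x + Pi.single i (t + 1))
    ?_ ?_ ?_ ?_
  · intro x hx
    simp only [mem_filter, mem_antidiagonalTuple] at hx
    have hsingle_le : ∀ j ∈ univ, (Pi.single i (t + 1) : Fin k → ℕ) j ≤ x j := by
      intro j _
      by_cases h : j = i
      · subst h
        simp only [Pi.single_eq_same]
        omega
      · simp [h]
    simp [mem_antidiagonalTuple, sum_tsub_distrib _ hsingle_le, hx.1]
  · intro x hx
    simp only [mem_antidiagonalTuple] at hx
    simp only [mem_filter, mem_antidiagonalTuple, Pi.add_apply, sum_add_distrib, hx,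
      sum_pi_single', mem_univ, if_true, Pi.single_eq_same, true_and]
    omega
  · intro x hx
    simp only [mem_filter] at hx
    ext j
    by_cases h : j = i
    · subst h
      simp only [Pi.add_apply, Pi.sub_apply, Pi.single_eq_same]
      omega
    · simp [h]
  · intro x _
    ext j
    simp

theorem filter_lt_apply_antidiagonalTuple_eq_empty {k m t : ℕ} (i : Fin k) (h : m ≤ t) :
    {x ∈ antidiagonalTuple k m | t < x i} = ∅ := by
  refine filter_false_of_mem fun x hx => ?_
  rw [mem_antidiagonalTuple] at hx
  have := hx ▸ single_le_sum (fun j _ => Nat.zero_le (x j)) (mem_univ i)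
  omega

theorem card_filter_lt_apply_antidiagonalTuple {k : ℕ} (i : Fin (k + 2)) (t m : ℕ) :
    #{x ∈ antidiagonalTuple (k + 2) m | t < x i} = (m - t + k).choose (k + 1) := by
  rcases le_or_gt m t with h | h
  · rw [filter_lt_apply_antidiagonalTuple_eq_empty i h, Nat.sub_eq_zero_of_le h]
    simp
  · obtain ⟨r, rfl⟩ : ∃ r, m = r + (t + 1) := ⟨m - (t + 1), by omega⟩
    rw [card_filter_lt_apply_antidiagonalTuple_add, card_antidiagonalTuple,
      show k + 2 + r - 1 = r + (k + 1) by omega, Nat.choose_symm_add,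
      show r + (t + 1) - t + k = r + (k + 1) by omega]

theorem card_filter_lt_sup_antidiagonalTuple {k m t : ℕ} (hm : m ≤ 2 * t + 1) :
    #{x ∈ antidiagonalTuple k m | t < univ.sup x} =
      ∑ i, #{x ∈ antidiagonalTuple k m | t < x i} := by
  rw [← card_biUnion]
  · congr 1
    ext x
    simp [Finset.lt_sup_iff]
  · intro i _ j _ hij
    refine disjoint_filter.2 fun x hx hi hj => ?_
    rw [mem_antidiagonalTuple] at hx
    have := hx ▸ sum_le_sum_of_subset (f := x) (subset_univ {i, j})
    rw [sum_pair hij] at this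
    omega

theorem card_filter_sup_le_antidiagonalTuple_add {k m t : ℕ} (hm : m ≤ 2 * t + 1) :
    #{x ∈ antidiagonalTuple (k + 2) m | univ.sup x ≤ t} + (k + 2) * (m - t + k).choose (k + 1) =
      (m + k + 1).choose (k + 1) := by
  have h := card_filter_add_card_filter_not (s := antidiagonalTuple (k + 2) m)
    (fun x => univ.sup x ≤ t)
  simp only [not_le] at h
  rw [card_filter_lt_sup_antidiagonalTuple hm, card_antidiagonalTuple] at h
  simp only [card_filter_lt_apply_antidiagonalTuple, sum_const, card_univ, Fintype.card_fin,
    smul_eq_mul] at h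
  rw [h, show k + 2 + m - 1 = m + (k + 1) by omega, Nat.choose_symm_add]
  rfl

theorem card_filter_two_mul_sup_lt_antidiagonalTuple_three {n : ℕ} (hn : 1 ≤ n) :
    #{x ∈ antidiagonalTuple 3 (n - 1) | 2 * univ.sup x < n} + 3 * (n / 2 + 1).choose 2 =
      (n + 1).choose 2 := by
  have h := card_filter_sup_le_antidiagonalTuple_add (k := 1) (t := (n - 1) / 2)
    (show n - 1 ≤ 2 * ((n - 1) / 2) + 1 by omega)
  rw [filter_congr fun x _ => show univ.sup x ≤ (n - 1) / 2 ↔ 2 * univ.sup x < n by omega,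
    show n - 1 - (n - 1) / 2 + 1 = n / 2 + 1 by omega, show n - 1 + 1 + 1 = n + 1 by omega] at h
  exact h

theorem card_filter_two_mul_sup_le_antidiagonalTuple_three {n : ℕ} (hn : 1 ≤ n) :
    #{x ∈ antidiagonalTuple 3 (n - 1) | 2 * univ.sup x ≤ n} + 3 * ((n + 1) / 2).choose 2 =
      (n + 1).choose 2 := by
  have h := card_filter_sup_le_antidiagonalTuple_add (k := 1) (t := n / 2)
    (show n - 1 ≤ 2 * (n / 2) + 1 by omega)
  rw [filter_congr fun x _ => show univ.sup x ≤ n / 2 ↔ 2 * univ.sup x ≤ n by omega,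
    show n - 1 - n / 2 + 1 = (n + 1) / 2 by omega, show n - 1 + 1 + 1 = n + 1 by omega] at h
  exact h

end Finset.Nat

/-- `δ = 3` case: each composition `(x₁, x₂, x₃)` of `n − 1` into three nonnegative parts
has probability `2/(n(n+1))`; the sum over `max x_j < n/2` plus half the sum over
`max x_j = n/2` equals `1/4 + (3/4)·1/(2⌊n/2⌋ + 1)`. -/
theorem three_regular_detection_probability (n : ℕ) (hn : 1 ≤ n) :
    (∑ x ∈ (Finset.Nat.antidiagonalTuple 3 (n - 1)).filter
        (fun x => 2 * Finset.univ.sup x < n), (2 : ℚ) / ((n : ℚ) * ((n : ℚ) + 1)))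
      + (1 / 2) * ∑ x ∈ (Finset.Nat.antidiagonalTuple 3 (n - 1)).filter
          (fun x => 2 * Finset.univ.sup x = n), (2 : ℚ) / ((n : ℚ) * ((n : ℚ) + 1))
    = 1 / 4 + (3 / 4) * (1 / (2 * ((n / 2 : ℕ) : ℚ) + 1)) := by
  have hlt := Nat.card_filter_two_mul_sup_lt_antidiagonalTuple_three hn
  have hle := Nat.card_filter_two_mul_sup_le_antidiagonalTuple_three hn
  rw [card_filter_le_eq_card_filter_lt_add_card_filter_eq] at hle
  simp only [sum_const, nsmul_eq_mul]
  have hlt' := congrArg (Nat.cast : ℕ → ℚ) hlt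
  have hle' := congrArg (Nat.cast : ℕ → ℚ) hle
  obtain ⟨k, rfl | rfl⟩ := n.even_or_odd'
  · simp only [show 2 * k / 2 = k by omega, show (2 * k + 1) / 2 = k by omega] at hlt' hle' ⊢
    push_cast [Nat.cast_choose_two] at hlt' hle' ⊢
    have hk : (k : ℚ) ≠ 0 := by norm_cast; omega
    field_simp
    linear_combination 4 * hlt' + 4 * hle'
  · simp only [show (2 * k + 1) / 2 = k by omega, show (2 * k + 1 + 1) / 2 = k + 1 by omega]
      at hlt' hle' ⊢
    push_cast [Nat.cast_choose_two] at hlt' hle' ⊢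
    field_simp
    linear_combination 4 * hlt' + 4 * hle'
end

section
/- The sequence of incomplete Beta function values I_{1/2}(1/(δ−2), (δ−1)/(δ−2)) converges to 1 as δ → ∞, where I_x(α, β) = (Γ(α+β)/(Γ(α)Γ(β))) ∫_0^x y^{α−1}(1−y)^{β−1} dy. -/
/-- Regularized incomplete Beta function
`I_x(α, β) = (Γ(α+β)/(Γ(α)Γ(β))) ∫_0^x y^{α−1}(1−y)^{β−1} dy`. -/
noncomputable def regIncBeta (x α β : ℝ) : ℝ :=
  (Real.Gamma (α + β) / (Real.Gamma α * Real.Gamma β)) *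
    ∫ y in (0 : ℝ)..x, y ^ (α - 1) * (1 - y) ^ (β - 1)

/-!
With `β = 1 + α` the integrand of `I_x(α, β)` is `y^{α-1}(1-y)^α`, and on `[0, x]` the factor
`(1-y)^α` lies between `(1-x)^α` and `1`. Since `∫_0^x y^{α-1} dy = x^α/α` and
`Γ(1+2α)/(Γ(α)Γ(1+α)) = α Γ(1+2α)/Γ(1+α)²`, the pole `1/α` cancels and
`I_x(α, 1+α)` is squeezed between `Γ(1+2α)/Γ(1+α)² (x(1-x))^α` and `Γ(1+2α)/Γ(1+α)² x^α`,
both of which tend to `1` as `α → 0⁺`. For the theorem, `α = 1/(δ-2)` and `β = 1 + α`.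
-/

open Real Filter Topology Set intervalIntegral MeasureTheory

lemma integral_zero_rpow_sub_one {α : ℝ} (hα : 0 < α) (x : ℝ) :
    ∫ y in (0 : ℝ)..x, y ^ (α - 1) = x ^ α / α := by
  rw [integral_rpow (Or.inl (by linarith)), sub_add_cancel, zero_rpow hα.ne', sub_zero]

lemma gamma_add_one_add_div_gamma_mul_gamma {α : ℝ} (hα : 0 < α) :
    Gamma (α + (1 + α)) / (Gamma α * Gamma (1 + α)) =
      Gamma (1 + 2 * α) / Gamma (1 + α) ^ 2 * α := by
  have hΓ : Gamma (1 + α) = α * Gamma α := by rw [add_comm, Gamma_add_one hα.ne']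
  have hΓpos : 0 < Gamma α := Gamma_pos_of_pos hα
  rw [show α + (1 + α) = 1 + 2 * α by ring, hΓ]
  field_simp

lemma regIncBeta_one_add_eq {x α : ℝ} (hα : 0 < α) :
    regIncBeta x α (1 + α) =
      Gamma (1 + 2 * α) / Gamma (1 + α) ^ 2 *
        (α * ∫ y in (0 : ℝ)..x, y ^ (α - 1) * (1 - y) ^ α) := by
  rw [regIncBeta, gamma_add_one_add_div_gamma_mul_gamma hα, add_sub_cancel_left, mul_assoc]

section Bounds

variable {x α : ℝ}

lemma intervalIntegrable_rpow_sub_one_mul_one_sub_rpow (hα : 0 < α) :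
    IntervalIntegrable (fun y : ℝ => y ^ (α - 1) * (1 - y) ^ α) volume 0 x :=
  (intervalIntegrable_rpow' (by linarith)).mul_continuousOn
    (ContinuousOn.rpow_const (by fun_prop) fun _ _ => Or.inr hα.le)

lemma mul_integral_rpow_sub_one_mul_one_sub_rpow_le (hα : 0 < α) (hx0 : 0 ≤ x) (hx1 : x ≤ 1) :
    α * ∫ y in (0 : ℝ)..x, y ^ (α - 1) * (1 - y) ^ α ≤ x ^ α := by
  have hmono : ∫ y in (0 : ℝ)..x, y ^ (α - 1) * (1 - y) ^ α ≤ ∫ y in (0 : ℝ)..x, y ^ (α - 1) :=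
    integral_mono_on hx0 (intervalIntegrable_rpow_sub_one_mul_one_sub_rpow hα)
      (intervalIntegrable_rpow' (by linarith)) fun y hy =>
        mul_le_of_le_one_right (rpow_nonneg hy.1 _)
          (rpow_le_one (by linarith [hy.2]) (by linarith [hy.1]) hα.le)
  calc _ ≤ α * ∫ y in (0 : ℝ)..x, y ^ (α - 1) := mul_le_mul_of_nonneg_left hmono hα.le
    _ = x ^ α := by rw [integral_zero_rpow_sub_one hα x]; field_simp

lemma le_mul_integral_rpow_sub_one_mul_one_sub_rpow (hα : 0 < α) (hx0 : 0 ≤ x) (hx1 : x ≤ 1) :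
    (x * (1 - x)) ^ α ≤ α * ∫ y in (0 : ℝ)..x, y ^ (α - 1) * (1 - y) ^ α := by
  have hmono : ∫ y in (0 : ℝ)..x, y ^ (α - 1) * (1 - x) ^ α ≤
      ∫ y in (0 : ℝ)..x, y ^ (α - 1) * (1 - y) ^ α :=
    integral_mono_on hx0 ((intervalIntegrable_rpow' (by linarith)).mul_const _)
      (intervalIntegrable_rpow_sub_one_mul_one_sub_rpow hα) fun y hy =>
        mul_le_mul_of_nonneg_left (rpow_le_rpow (by linarith) (by linarith [hy.2]) hα.le)
          (rpow_nonneg hy.1 _)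
  calc (x * (1 - x)) ^ α = α * ∫ y in (0 : ℝ)..x, y ^ (α - 1) * (1 - x) ^ α := by
        rw [intervalIntegral.integral_mul_const, integral_zero_rpow_sub_one hα x,
          mul_rpow hx0 (by linarith)]
        field_simp
    _ ≤ _ := mul_le_mul_of_nonneg_left hmono hα.le

lemma regIncBeta_one_add_mem_Icc (hα : 0 < α) (hx0 : 0 ≤ x) (hx1 : x ≤ 1) :
    regIncBeta x α (1 + α) ∈ Icc (Gamma (1 + 2 * α) / Gamma (1 + α) ^ 2 * (x * (1 - x)) ^ α)
      (Gamma (1 + 2 * α) / Gamma (1 + α) ^ 2 * x ^ α) := by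
  have hC : 0 ≤ Gamma (1 + 2 * α) / Gamma (1 + α) ^ 2 :=
    div_nonneg (Gamma_pos_of_pos (by linarith)).le (sq_nonneg _)
  rw [regIncBeta_one_add_eq hα]
  exact ⟨mul_le_mul_of_nonneg_left (le_mul_integral_rpow_sub_one_mul_one_sub_rpow hα hx0 hx1) hC,
    mul_le_mul_of_nonneg_left (mul_integral_rpow_sub_one_mul_one_sub_rpow_le hα hx0 hx1) hC⟩

end Bounds

lemma tendsto_gamma_one_add_two_mul_div_gamma_one_add_sq :
    Tendsto (fun α : ℝ => Gamma (1 + 2 * α) / Gamma (1 + α) ^ 2) (𝓝 0) (𝓝 1) := by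
  have hΓ : ContinuousAt Gamma 1 :=
    (differentiableAt_Gamma fun m h => by linarith [(Nat.cast_nonneg m : (0 : ℝ) ≤ m)]).continuousAt
  have hnum : Tendsto (fun α : ℝ => Gamma (1 + 2 * α)) (𝓝 0) (𝓝 1) := by
    have := hΓ.tendsto.comp
      ((by fun_prop : Continuous fun α : ℝ => 1 + 2 * α).tendsto' 0 1 (by norm_num))
    rwa [Gamma_one] at this
  have hden : Tendsto (fun α : ℝ => Gamma (1 + α) ^ 2) (𝓝 0) (𝓝 1) := by
    have := (hΓ.tendsto.comp
      ((by fun_prop : Continuous fun α : ℝ => 1 + α).tendsto' 0 1 (by norm_num))).pow 2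
    rwa [Gamma_one, one_pow] at this
  have := hnum.div hden one_ne_zero
  rwa [div_one] at this

lemma tendsto_rpow_nhds_zero {c : ℝ} (hc : 0 < c) :
    Tendsto (fun α : ℝ => c ^ α) (𝓝 0) (𝓝 1) := by
  simpa using (continuousAt_const_rpow (b := 0) hc.ne').tendsto

lemma tendsto_regIncBeta_one_add {x : ℝ} (hx0 : 0 < x) (hx1 : x < 1) :
    Tendsto (fun α : ℝ => regIncBeta x α (1 + α)) (𝓝[>] 0) (𝓝 1) := by
  have hratio := tendsto_gamma_one_add_two_mul_div_gamma_one_add_sq.mono_left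
    (nhdsWithin_le_nhds (s := Ioi 0))
  have hlow := hratio.mul
    ((tendsto_rpow_nhds_zero (mul_pos hx0 (sub_pos.2 hx1))).mono_left nhdsWithin_le_nhds)
  have hhigh := hratio.mul ((tendsto_rpow_nhds_zero hx0).mono_left nhdsWithin_le_nhds)
  rw [mul_one] at hlow hhigh
  exact tendsto_of_tendsto_of_tendsto_of_le_of_le' hlow hhigh
    (eventually_nhdsWithin_of_forall fun α hα => (regIncBeta_one_add_mem_Icc hα hx0.le hx1.le).1)
    (eventually_nhdsWithin_of_forall fun α hα => (regIncBeta_one_add_mem_Icc hα hx0.le hx1.le).2)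

/-- `I_{1/2}(1/(δ−2), (δ−1)/(δ−2)) → 1` as `δ → ∞`. -/
theorem incBeta_tendsto_one :
    Filter.Tendsto
      (fun δ : ℕ => regIncBeta (1 / 2) (1 / ((δ : ℝ) - 2)) (((δ : ℝ) - 1) / ((δ : ℝ) - 2)))
      Filter.atTop (nhds 1) := by
  have hα : Tendsto (fun δ : ℕ => 1 / ((δ : ℝ) - 2)) atTop (𝓝[>] 0) := by
    simp only [one_div]
    exact tendsto_inv_atTop_nhdsGT_zero.comp
      (tendsto_atTop_add_const_right _ _ tendsto_natCast_atTop_atTop)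
  have hβ : ∀ᶠ δ : ℕ in atTop, ((δ : ℝ) - 1) / ((δ : ℝ) - 2) = 1 + 1 / ((δ : ℝ) - 2) := by
    filter_upwards [eventually_ge_atTop 3] with δ hδ
    have : (3 : ℝ) ≤ δ := by exact_mod_cast hδ
    field_simp [show (δ : ℝ) - 2 ≠ 0 by linarith]
    ring
  refine ((tendsto_regIncBeta_one_add (x := 1 / 2) (by norm_num) (by norm_num)).comp hα).congr' ?_
  filter_upwards [hβ] with δ hδ
  simp only [Function.comp_apply, hδ]
end

section
/- The limit as δ → ∞ of φ_1(δ) = 1 − δ(1 − I_{1/2}(1/(δ−2), (δ−1)/(δ−2))) equals 1 − ln 2. -/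
open Real Filter Set Topology

lemma one_sub_one_sub_rpow_le {y ε : ℝ} (hy₀ : 0 ≤ y) (hy : y ≤ 1 / 2) (hε : 0 ≤ ε) :
    1 - (1 - y) ^ ε ≤ 2 * ε * y := by
  have hpos : 0 < 1 - y := by linarith
  have hlog : -(2 * y) ≤ log (1 - y) := by
    calc -(2 * y) ≤ 1 - (1 - y)⁻¹ := by
          rw [inv_eq_one_div, le_sub_iff_add_le, ← le_sub_iff_add_le', div_le_iff₀ hpos]
          nlinarith
      _ ≤ log (1 - y) := one_sub_inv_le_log_of_pos hpos
  calc 1 - (1 - y) ^ ε ≤ -(log (1 - y) * ε) := by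
        linarith [rpow_def_of_pos hpos ε ▸ add_one_le_exp (log (1 - y) * ε)]
    _ ≤ 2 * ε * y := by nlinarith

lemma abs_rpow_mul_one_sub_rpow_sub_one_le {y ε : ℝ} (hy : y ∈ Ioc 0 (1 / 2)) (hε : 0 ≤ ε) :
    |y ^ (ε - 1) * ((1 - y) ^ ε - 1)| ≤ 2 * ε := by
  obtain ⟨hy₀, hy⟩ := hy
  have hle : (1 - y) ^ ε ≤ 1 := rpow_le_one (by linarith) (by linarith) hε
  have hyε : y ^ ε ≤ 1 := rpow_le_one hy₀.le (by linarith) hε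
  calc |y ^ (ε - 1) * ((1 - y) ^ ε - 1)| = y ^ (ε - 1) * (1 - (1 - y) ^ ε) := by
        rw [abs_mul, abs_of_nonneg (rpow_nonneg hy₀.le _), abs_of_nonpos (by linarith), neg_sub]
    _ ≤ y ^ (ε - 1) * (2 * ε * y) :=
        mul_le_mul_of_nonneg_left (one_sub_one_sub_rpow_le hy₀.le hy hε) (rpow_nonneg hy₀.le _)
    _ = 2 * ε * y ^ ε := by rw [rpow_sub_one hy₀.ne']; field_simp
    _ ≤ 2 * ε := by nlinarith

noncomputable def betaRemainder (ε : ℝ) : ℝ :=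
  ∫ y in (0 : ℝ)..1 / 2, y ^ (ε - 1) * ((1 - y) ^ ε - 1)

lemma abs_betaRemainder_le {ε : ℝ} (hε : 0 ≤ ε) : |betaRemainder ε| ≤ ε := by
  have h := intervalIntegral.norm_integral_le_of_norm_le_const (a := 0) (b := 1 / 2)
    fun y hy ↦ (norm_eq_abs _).trans_le <| abs_rpow_mul_one_sub_rpow_sub_one_le
      (uIoc_of_le (by norm_num : (0 : ℝ) ≤ 1 / 2) ▸ hy) hε
  rw [betaRemainder]
  norm_num at h
  linarith

lemma tendsto_betaRemainder : Tendsto betaRemainder (𝓝[>] 0) (𝓝 0) := by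
  refine squeeze_zero_norm' ?_ (tendsto_nhdsWithin_of_tendsto_nhds tendsto_id)
  filter_upwards [self_mem_nhdsWithin] with ε (hε : 0 < ε)
  exact abs_betaRemainder_le hε.le

lemma integral_rpow_mul_one_sub_rpow {ε : ℝ} (hε : 0 < ε) :
    ∫ y in (0 : ℝ)..1 / 2, y ^ (ε - 1) * (1 - y) ^ ε = (1 / 2) ^ ε / ε + betaRemainder ε := by
  have hpow : IntervalIntegrable (fun y : ℝ ↦ y ^ (ε - 1)) MeasureTheory.volume 0 (1 / 2) :=
    intervalIntegral.intervalIntegrable_rpow' (by linarith)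
  have hrem := hpow.mul_continuousOn (g := fun y ↦ (1 - y) ^ ε - 1)
    ((continuousOn_const.sub continuousOn_id).rpow_const (fun _ _ ↦ Or.inr hε.le) |>.sub
      continuousOn_const)
  have hsplit (y : ℝ) :
      y ^ (ε - 1) * (1 - y) ^ ε = y ^ (ε - 1) + y ^ (ε - 1) * ((1 - y) ^ ε - 1) := by
    ring
  simp_rw [hsplit]
  rw [intervalIntegral.integral_add hpow hrem, integral_rpow (Or.inl (by linarith)),
    sub_add_cancel, zero_rpow hε.ne', sub_zero, betaRemainder]

noncomputable def gammaRatio (ε : ℝ) : ℝ := Gamma (1 + 2 * ε) / Gamma (1 + ε) ^ 2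

lemma regIncBeta_half {ε : ℝ} (hε : 0 < ε) :
    regIncBeta (1 / 2) ε (1 + ε) =
      gammaRatio ε * (1 / 2) ^ ε + ε * gammaRatio ε * betaRemainder ε := by
  have hΓ : Gamma (1 + ε) = ε * Gamma ε := by rw [add_comm, Gamma_add_one hε.ne']
  rw [regIncBeta, show ε + (1 + ε) = 1 + 2 * ε by ring, add_sub_cancel_left,
    integral_rpow_mul_one_sub_rpow hε, gammaRatio, hΓ]
  field_simp

lemma gammaRatio_zero : gammaRatio 0 = 1 := by simp [gammaRatio]

lemma hasDerivAt_gammaRatio_zero : HasDerivAt gammaRatio 0 0 := by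
  have hΓ (x : ℝ) (hx : x = 1) : HasDerivAt Gamma (-eulerMascheroniConstant) x :=
    hx ▸ hasDerivAt_Gamma_one
  have hnum : HasDerivAt (fun ε : ℝ ↦ Gamma (1 + 2 * ε)) (-eulerMascheroniConstant * 2) 0 := by
    simpa [Function.comp_def] using
      (hΓ _ (by simp)).comp (0 : ℝ) (((hasDerivAt_id (0 : ℝ)).const_mul 2).const_add 1)
  have hden : HasDerivAt (fun ε : ℝ ↦ Gamma (1 + ε)) (-eulerMascheroniConstant) 0 := by
    simpa [Function.comp_def] using
      (hΓ _ (by simp)).comp (0 : ℝ) ((hasDerivAt_id (0 : ℝ)).const_add 1)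
  exact (hnum.fun_div (hden.fun_pow 2) (by simp)).congr_deriv (by norm_num; ring)

lemma hasDerivAt_gammaRatio_mul_half_rpow :
    HasDerivAt (fun ε ↦ gammaRatio ε * (1 / 2 : ℝ) ^ ε) (-log 2) 0 :=
  (hasDerivAt_gammaRatio_zero.fun_mul
    (hasStrictDerivAt_const_rpow (by norm_num : (0 : ℝ) < 1 / 2) 0).hasDerivAt).congr_deriv
      (by simp [gammaRatio_zero])

lemma tendsto_one_sub_regIncBeta_div :
    Tendsto (fun ε ↦ (1 - regIncBeta (1 / 2) ε (1 + ε)) / ε) (𝓝[>] 0) (𝓝 (log 2)) := by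
  have hslope : Tendsto (fun ε ↦ (1 - gammaRatio ε * (1 / 2 : ℝ) ^ ε) / ε) (𝓝[>] 0)
      (𝓝 (log 2)) := by
    have h := (hasDerivAt_iff_tendsto_slope.mp hasDerivAt_gammaRatio_mul_half_rpow).neg
    rw [neg_neg] at h
    refine (h.mono_left (nhdsGT_le_nhdsNE 0)).congr fun ε ↦ ?_
    rw [slope_def_field, gammaRatio_zero, rpow_zero, mul_one, sub_zero]
    ring
  have hrem : Tendsto (fun ε ↦ gammaRatio ε * betaRemainder ε) (𝓝[>] 0) (𝓝 0) := by
    have hratio : Tendsto gammaRatio (𝓝[>] 0) (𝓝 1) :=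
      gammaRatio_zero ▸ hasDerivAt_gammaRatio_zero.continuousAt.continuousWithinAt
    simpa using hratio.mul tendsto_betaRemainder
  refine sub_zero (log 2) ▸ (hslope.sub hrem).congr' ?_
  filter_upwards [self_mem_nhdsWithin] with ε (hε : 0 < ε)
  rw [regIncBeta_half hε]
  field_simp
  ring

lemma tendsto_two_add_inv_mul_one_sub_regIncBeta :
    Tendsto (fun ε ↦ (2 + ε⁻¹) * (1 - regIncBeta (1 / 2) ε (1 + ε))) (𝓝[>] 0) (𝓝 (log 2)) := by
  have hlin : Tendsto (fun ε : ℝ ↦ 2 * ε + 1) (𝓝[>] 0) (𝓝 1) :=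
    tendsto_nhdsWithin_of_tendsto_nhds <|
      (by fun_prop : Continuous fun ε : ℝ ↦ 2 * ε + 1).tendsto' 0 1 (by norm_num)
  refine one_mul (log 2) ▸ (hlin.mul tendsto_one_sub_regIncBeta_div).congr' ?_
  filter_upwards [self_mem_nhdsWithin] with ε (hε : 0 < ε)
  field_simp

/-- `φ₁(δ) = 1 − δ(1 − I_{1/2}(1/(δ−2), (δ−1)/(δ−2))) → 1 − ln 2` as `δ → ∞`. -/
theorem phi1_tendsto_one_sub_log_two :
    Filter.Tendsto
      (fun δ : ℕ => 1 - (δ : ℝ) *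
        (1 - regIncBeta (1 / 2) (1 / ((δ : ℝ) - 2)) (((δ : ℝ) - 1) / ((δ : ℝ) - 2))))
      Filter.atTop (nhds (1 - Real.log 2)) := by
  have hε : Tendsto (fun δ : ℕ ↦ ((δ : ℝ) - 2)⁻¹) atTop (𝓝[>] 0) :=
    tendsto_inv_atTop_nhdsGT_zero.comp
      (tendsto_atTop_add_const_right _ (-2) tendsto_natCast_atTop_atTop)
  refine ((tendsto_two_add_inv_mul_one_sub_regIncBeta.comp hε).const_sub 1).congr' ?_
  filter_upwards [eventually_ge_atTop 3] with δ hδ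
  have hδ' : (3 : ℝ) ≤ δ := by exact_mod_cast hδ
  have hβ : ((δ : ℝ) - 1) / (δ - 2) = 1 + ((δ : ℝ) - 2)⁻¹ := by
    field_simp [show (δ : ℝ) - 2 ≠ 0 by linarith]
    ring
  rw [Function.comp_apply, inv_inv, one_div ((δ : ℝ) - 2), hβ, add_sub_cancel]
end

section
/- For the Pólya urn with b_1 = 1, b_2 = δ − 1, ε = δ − 2, n − 1 draws, and X_1 the number of draws of the first color, define P_{e1}(n) = (1/2)P(X_1 = n/2) + P(X_1 > n/2). Then P_{e1}(2i+1) = P_{e1}(2i) for all positive integers i; in particular P_{e1}(n) is non-decreasing in n. -/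
open Finset

/-- Marginal distribution of `X₁` in the Pólya urn with `b₁ = 1`, `b₂ = δ − 1`,
`ε = δ − 2` after `n − 1` draws:
`P(X₁ = x) = C(n−1, x) · ∏_{l<x}(1+lε) · ∏_{l<n−1−x}(δ−1+lε) / ∏_{i<n−1}(δ+iε)`. -/
noncomputable def urnMarginal (δ n x : ℕ) : ℚ :=
  ((n - 1).choose x : ℚ) *
      ((∏ l ∈ Finset.range x, ((1 : ℚ) + (l : ℚ) * ((δ : ℚ) - 2))) *
        (∏ l ∈ Finset.range (n - 1 - x), (((δ : ℚ) - 1) + (l : ℚ) * ((δ : ℚ) - 2)))) /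
    (∏ i ∈ Finset.range (n - 1), ((δ : ℚ) + (i : ℚ) * ((δ : ℚ) - 2)))

/-- `P_{e1}(n) = (1/2)P(X₁ = n/2) + P(X₁ > n/2)` (the term `P(X₁ = n/2)` is zero when `n`
is odd). -/
noncomputable def Pe1 (δ n : ℕ) : ℚ :=
  (1 / 2) * (∑ x ∈ (Finset.range n).filter (fun x => 2 * x = n), urnMarginal δ n x)
    + ∑ x ∈ (Finset.range n).filter (fun x => 2 * x > n), urnMarginal δ n x

/-!
Write `T_m(k)` for the probability that at least `k` of the first `m` draws have the first
colour. Conditioning on the last draw, one more draw raises the tail by the mass that crosses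
its boundary:
`T_{m+1}(k+1) = T_m(k+1) + P(X_m = k) (1 + kε) / (δ + mε)`.
From the middle state `x = i` after `2i − 1` draws the first colour is drawn with probability
exactly `1/2`, which turns `P_{e1}(2i+1) = T_{2i}(i+1)` into `P_{e1}(2i)`. Passing from
`2i + 1` to `2i + 2` raises `P_{e1}` by half of `P(X_{2i} = i, colour 1 next)` minus
`P(X_{2i} = i + 1, colour 2 next)`; these two are a common factor times `C(2i, i)` and
`C(2i, i + 1)`, so the increment is nonnegative.
-/

section PolyaUrn

variable {R : Type*}

section CommSemiring

variable [CommSemiring R]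

def risingProd (b ε : R) (k : ℕ) : R :=
  ∏ l ∈ range k, (b + l * ε)

theorem risingProd_succ (b ε : R) (k : ℕ) :
    risingProd b ε (k + 1) = risingProd b ε k * (b + k * ε) :=
  prod_range_succ _ _

variable (b₁ b₂ ε : R)

/-- Unnormalized law of the number of first-colour draws among the first `m`; the probabilities
are obtained by dividing by `risingProd (b₁ + b₂) ε m`. -/
def polyaWeight (m x : ℕ) : R :=
  m.choose x * (risingProd b₁ ε x * risingProd b₂ ε (m - x))

def polyaTail (m k : ℕ) : R :=
  ∑ x ∈ Ico k (m + 1), polyaWeight b₁ b₂ ε m x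

theorem polyaWeight_eq_zero_of_lt {m x : ℕ} (h : m < x) : polyaWeight b₁ b₂ ε m x = 0 := by
  simp [polyaWeight, Nat.choose_eq_zero_of_lt h]

theorem polyaWeight_mul_up (m x : ℕ) :
    polyaWeight b₁ b₂ ε m x * (b₁ + x * ε) =
      m.choose x * (risingProd b₁ ε (x + 1) * risingProd b₂ ε (m - x)) := by
  rw [polyaWeight, risingProd_succ]
  ring

theorem polyaWeight_succ_mul_stay (m x : ℕ) :
    polyaWeight b₁ b₂ ε m (x + 1) * (b₂ + (m - (x + 1) : ℕ) * ε) =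
      m.choose (x + 1) * (risingProd b₁ ε (x + 1) * risingProd b₂ ε (m - x)) := by
  rcases lt_or_ge x m with hx | hx
  · rw [polyaWeight, show m - x = m - (x + 1) + 1 by omega, risingProd_succ b₂]
    ring
  · simp [polyaWeight, Nat.choose_eq_zero_of_lt (Nat.lt_succ_of_le hx)]

theorem polyaWeight_succ_succ (m x : ℕ) :
    polyaWeight b₁ b₂ ε (m + 1) (x + 1) =
      polyaWeight b₁ b₂ ε m x * (b₁ + x * ε) +
        polyaWeight b₁ b₂ ε m (x + 1) * (b₂ + (m - (x + 1) : ℕ) * ε) := by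
  rw [polyaWeight_mul_up, polyaWeight_succ_mul_stay, polyaWeight, Nat.choose_succ_succ',
    Nat.add_sub_add_right]
  push_cast
  ring

theorem polya_up_add_stay {m x : ℕ} (h : x ≤ m) :
    (b₁ + x * ε) + (b₂ + (m - x : ℕ) * ε) = b₁ + b₂ + m * ε := by
  obtain ⟨d, rfl⟩ := Nat.exists_eq_add_of_le h
  rw [Nat.add_sub_cancel_left]
  push_cast
  ring

theorem polyaTail_eq_add (m k : ℕ) :
    polyaTail b₁ b₂ ε m k = polyaWeight b₁ b₂ ε m k + polyaTail b₁ b₂ ε m (k + 1) := by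
  rcases le_or_gt k m with hk | hk
  · exact sum_eq_sum_Ico_succ_bot (by omega) _
  · rw [polyaTail, polyaTail, Ico_eq_empty_of_le (by omega), Ico_eq_empty_of_le (by omega),
      polyaWeight_eq_zero_of_lt _ _ _ hk, sum_empty, add_zero]

theorem polyaTail_succ_succ {m k : ℕ} (hk : k ≤ m) :
    polyaTail b₁ b₂ ε (m + 1) (k + 1) =
      (b₁ + b₂ + m * ε) * polyaTail b₁ b₂ ε m (k + 1) +
        polyaWeight b₁ b₂ ε m k * (b₁ + k * ε) := by
  set w := polyaWeight b₁ b₂ ε m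
  have hshift : polyaTail b₁ b₂ ε (m + 1) (k + 1) =
      ∑ x ∈ Ico k (m + 1), (w x * (b₁ + x * ε) + w (x + 1) * (b₂ + (m - (x + 1) : ℕ) * ε)) := by
    rw [polyaTail, ← sum_Ico_add']
    exact sum_congr rfl fun x _ ↦ polyaWeight_succ_succ b₁ b₂ ε m x
  have hstay : ∑ x ∈ Ico k (m + 1), w (x + 1) * (b₂ + (m - (x + 1) : ℕ) * ε) =
      ∑ x ∈ Ico (k + 1) (m + 1), w x * (b₂ + (m - x : ℕ) * ε) := by
    rw [sum_Ico_add' (fun x ↦ w x * (b₂ + (m - x : ℕ) * ε)), sum_Ico_succ_top (by omega),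
      show w (m + 1) = 0 from polyaWeight_eq_zero_of_lt _ _ _ (Nat.lt_succ_self m), zero_mul,
      add_zero]
  rw [hshift, sum_add_distrib, sum_eq_sum_Ico_succ_bot (by omega), hstay, add_assoc,
    ← sum_add_distrib, add_comm, polyaTail, mul_sum]
  congr 1
  refine sum_congr rfl fun x hx ↦ ?_
  rw [← mul_add, polya_up_add_stay _ _ _ (by simp at hx; omega), mul_comm]

end CommSemiring

section Ordered

variable [CommSemiring R] [PartialOrder R] {b b₁ b₂ ε : R}

theorem risingProd_nonneg [IsOrderedRing R] (hb : 0 ≤ b) (hε : 0 ≤ ε) (k : ℕ) :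
    0 ≤ risingProd b ε k :=
  prod_nonneg fun _ _ ↦ add_nonneg hb (by positivity)

theorem risingProd_pos [IsStrictOrderedRing R] (hb : 0 < b) (hε : 0 ≤ ε) (k : ℕ) :
    0 < risingProd b ε k :=
  prod_pos fun _ _ ↦ add_pos_of_pos_of_nonneg hb (by positivity)

theorem polyaWeight_middle_succ_mul_stay_le [IsOrderedRing R] (hb₁ : 0 ≤ b₁) (hb₂ : 0 ≤ b₂)
    (hε : 0 ≤ ε) (i : ℕ) :
    polyaWeight b₁ b₂ ε (2 * i) (i + 1) * (b₂ + (2 * i - (i + 1) : ℕ) * ε) ≤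
      polyaWeight b₁ b₂ ε (2 * i) i * (b₁ + i * ε) := by
  rw [polyaWeight_succ_mul_stay, polyaWeight_mul_up]
  have hchoose : (2 * i).choose (i + 1) ≤ (2 * i).choose i := by
    simpa using Nat.choose_le_middle (i + 1) (2 * i)
  exact mul_le_mul_of_nonneg_right (Nat.mono_cast hchoose)
    (mul_nonneg (risingProd_nonneg hb₁ hε _) (risingProd_nonneg hb₂ hε _))

end Ordered

end PolyaUrn

theorem urnMarginal_succ (δ m x : ℕ) :
    urnMarginal δ (m + 1) x =
      polyaWeight 1 (δ - 1 : ℚ) (δ - 2) m x / risingProd (δ : ℚ) (δ - 2) m :=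
  rfl

theorem Pe1_two_mul_add_one (δ i : ℕ) :
    Pe1 δ (2 * i + 1) =
      polyaTail 1 (δ - 1 : ℚ) (δ - 2) (2 * i) (i + 1) / risingProd (δ : ℚ) (δ - 2) (2 * i) := by
  have hmid : (range (2 * i + 1)).filter (fun x ↦ 2 * x = 2 * i + 1) = ∅ := by
    ext x; simp; omega
  have hupper :
      (range (2 * i + 1)).filter (fun x ↦ 2 * x > 2 * i + 1) = Ico (i + 1) (2 * i + 1) := by
    ext x; simp; omega
  simp only [Pe1, hmid, hupper, sum_empty, mul_zero, zero_add, polyaTail, sum_div,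
    urnMarginal_succ]

theorem Pe1_two_mul_add_two (δ i : ℕ) :
    Pe1 δ (2 * i + 2) =
      (polyaWeight 1 (δ - 1 : ℚ) (δ - 2) (2 * i + 1) (i + 1) / 2 +
          polyaTail 1 (δ - 1 : ℚ) (δ - 2) (2 * i + 1) (i + 2)) /
        risingProd (δ : ℚ) (δ - 2) (2 * i + 1) := by
  have hmid : (range (2 * i + 2)).filter (fun x ↦ 2 * x = 2 * i + 2) = {i + 1} := by
    ext x; simp; omega
  have hupper :
      (range (2 * i + 2)).filter (fun x ↦ 2 * x > 2 * i + 2) = Ico (i + 2) (2 * i + 2) := by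
    ext x; simp; omega
  simp only [Pe1, hmid, hupper, sum_singleton, polyaTail, urnMarginal_succ, add_div, sum_div]
  ring

theorem Pe1_odd_eq_even {δ : ℕ} (hδ : 2 ≤ δ) {i : ℕ} (hi : 0 < i) :
    Pe1 δ (2 * i + 1) = Pe1 δ (2 * i) := by
  obtain ⟨j, rfl⟩ : ∃ j, i = j + 1 := ⟨i - 1, by omega⟩
  have hε : (0 : ℚ) ≤ δ - 2 := by simp [hδ]
  have hc : (0 : ℚ) < δ + (2 * j + 1 : ℕ) * (δ - 2) := by positivity
  have hD := risingProd_pos (by positivity : (0 : ℚ) < δ) hε (2 * j + 1)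
  rw [Pe1_two_mul_add_one, show 2 * (j + 1) = 2 * j + 1 + 1 by ring, Pe1_two_mul_add_two,
    polyaTail_succ_succ _ _ _ (by omega), risingProd_succ]
  field_simp
  push_cast
  ring

theorem Pe1_odd_le_even {δ : ℕ} (hδ : 2 ≤ δ) {i : ℕ} (hi : 0 < i) :
    Pe1 δ (2 * i + 1) ≤ Pe1 δ (2 * i + 2) := by
  have hε : (0 : ℚ) ≤ δ - 2 := by simp [hδ]
  have hc : (0 : ℚ) < δ + (2 * i : ℕ) * (δ - 2) := by positivity
  have hD := risingProd_pos (by positivity : (0 : ℚ) < δ) hε (2 * i)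
  have hflow := polyaWeight_middle_succ_mul_stay_le zero_le_one
    (by linarith : (0 : ℚ) ≤ δ - 1) hε i
  have hsum := polya_up_add_stay (1 : ℚ) (δ - 1) (δ - 2) (show i + 1 ≤ 2 * i by omega)
  rw [Pe1_two_mul_add_one, Pe1_two_mul_add_two, polyaWeight_succ_succ,
    polyaTail_succ_succ _ _ _ (by omega : i + 1 ≤ 2 * i), polyaTail_eq_add _ _ _ (2 * i) (i + 1),
    risingProd_succ, div_le_div_iff₀ hD (mul_pos hD hc)]
  set W := polyaWeight 1 (δ - 1 : ℚ) (δ - 2) (2 * i)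
  set D := risingProd (δ : ℚ) (δ - 2) (2 * i)
  nlinarith [mul_le_mul_of_nonneg_left hflow hD.le, congrArg (· * (W (i + 1) * D)) hsum]

theorem Pe1_le_succ {δ : ℕ} (hδ : 2 ≤ δ) {n : ℕ} (hn : 2 ≤ n) : Pe1 δ n ≤ Pe1 δ (n + 1) := by
  obtain ⟨i, rfl | rfl⟩ := Nat.even_or_odd' n
  · exact (Pe1_odd_eq_even hδ (by omega)).ge
  · exact Pe1_odd_le_even hδ (by omega)

/-- `P_{e1}(2i+1) = P_{e1}(2i)` for all positive integers `i`; in particular `P_{e1}(n)`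
is non-decreasing in `n`. -/
theorem Pe1_odd_eq_even_and_monotone (δ : ℕ) (hδ : 2 ≤ δ) :
    (∀ i : ℕ, 0 < i → Pe1 δ (2 * i + 1) = Pe1 δ (2 * i)) ∧
    (∀ n m : ℕ, 2 ≤ n → n ≤ m → Pe1 δ n ≤ Pe1 δ m) :=
  ⟨fun _ hi ↦ Pe1_odd_eq_even hδ hi, fun _ _ hn hnm ↦
    monotoneOn_nat_Ici_of_le_succ (fun _ ↦ Pe1_le_succ hδ) hn (hn.trans hnm) hnm⟩
end

section
/- With the same urn marginal as above, P_{e1}(n = 2i+2) = P_{e1}(n = 2i+1) + (1/(2i)) · (1 + i(δ−2))/(2 + (2i+1)(δ−2)) · P(X_1 = i+1 | n = 2i+1), so P_{e1} strictly increases from each odd n to the next even n (when the added term is positive). -/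
/-!
Write `p m x` for the probability of `x` draws of the first colour after `m` draws, and
`w x = 1 + x(δ - 2)` for the weight of the first colour when it has been drawn `x` times.
One further draw moves the mass `p m x · w x / T_m` from `x` to `x + 1` (`T_m = δ + m(δ - 2)` is
the total weight), so a tail probability `P(X₁ > a)` grows by exactly the flux across `a`.
Comparing `n = 2i + 1` with `n = 2i + 2` and using `T_{2i} = w i + w (i + 1)`, the increment of
`P_{e1}` becomes `w i (p (2i) i - p (2i) (i + 1)) / (2 T_{2i})`. Since `b₂ = b₁ + ε`, the
weight of the second colour after `i - 1` of its draws is again `w i`, which makes the central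
ratio purely binomial: `i · p (2i) i = (i + 1) · p (2i) (i + 1)`.
-/

open Finset

lemma sum_Ioc_eq_add_of_telescoping {M : Type*} [AddCommGroup M] {f g G : ℕ → M}
    (h : ∀ x, f (x + 1) = g (x + 1) + (G x - G (x + 1))) {a b : ℕ} (hab : a ≤ b) :
    ∑ x ∈ Ioc a b, f x = ∑ x ∈ Ioc a b, g x + (G a - G b) := by
  induction b, hab using Nat.le_induction with
  | base => simp
  | succ b hab ih =>
    rw [sum_Ioc_succ_top hab, sum_Ioc_succ_top hab, ih, h]
    abel

section Polya

variable {b₁ b₂ ε : ℚ}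

noncomputable def polyaMarginal (b₁ b₂ ε : ℚ) (m x : ℕ) : ℚ :=
  (m.choose x : ℚ) * ((∏ l ∈ range x, (b₁ + l * ε)) * ∏ l ∈ range (m - x), (b₂ + l * ε)) /
    ∏ l ∈ range m, (b₁ + b₂ + l * ε)

lemma polyaMarginal_eq_zero_of_lt {m x : ℕ} (h : m < x) : polyaMarginal b₁ b₂ ε m x = 0 := by
  simp [polyaMarginal, Nat.choose_eq_zero_of_lt h]

lemma polyaMarginal_succ_succ {m : ℕ} (hT : ∀ l ≤ m, b₁ + b₂ + l * ε ≠ 0) (x : ℕ) :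
    (b₁ + b₂ + m * ε) * polyaMarginal b₁ b₂ ε (m + 1) (x + 1) =
      (b₁ + b₂ + m * ε) * polyaMarginal b₁ b₂ ε m (x + 1) +
        (polyaMarginal b₁ b₂ ε m x * (b₁ + x * ε) -
          polyaMarginal b₁ b₂ ε m (x + 1) * (b₁ + (x + 1 : ℕ) * ε)) := by
  have hD : ∏ l ∈ range m, (b₁ + b₂ + l * ε) ≠ 0 :=
    prod_ne_zero_iff.mpr fun l hl => hT l (mem_range.mp hl).le
  have hTm := hT m le_rfl
  rcases lt_trichotomy x m with hx | rfl | hx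
  · obtain ⟨k, rfl⟩ := Nat.exists_eq_add_of_lt hx
    simp only [polyaMarginal, Nat.choose_succ_succ', prod_range_succ,
      show x + k + 1 + 1 - (x + 1) = k + 1 by omega, show x + k + 1 - (x + 1) = k by omega,
      show x + k + 1 - x = k + 1 by omega]
    field_simp
    push_cast
    ring
  · rw [polyaMarginal_eq_zero_of_lt (Nat.lt_succ_self x)]
    simp only [polyaMarginal, Nat.choose_self, Nat.sub_self, prod_range_succ]
    field_simp
    simp
  · simp only [polyaMarginal_eq_zero_of_lt hx, polyaMarginal_eq_zero_of_lt (Nat.succ_lt_succ hx),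
      polyaMarginal_eq_zero_of_lt (hx.trans (Nat.lt_succ_self x))]
    ring

lemma polyaMarginal_sum_Ioc_succ {m a : ℕ} (hT : ∀ l ≤ m, b₁ + b₂ + l * ε ≠ 0) (ha : a ≤ m) :
    (b₁ + b₂ + m * ε) * ∑ x ∈ Ioc a (m + 1), polyaMarginal b₁ b₂ ε (m + 1) x =
      (b₁ + b₂ + m * ε) * ∑ x ∈ Ioc a m, polyaMarginal b₁ b₂ ε m x +
        polyaMarginal b₁ b₂ ε m a * (b₁ + a * ε) := by
  have telescope := sum_Ioc_eq_add_of_telescoping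
    (f := fun x => (b₁ + b₂ + m * ε) * polyaMarginal b₁ b₂ ε (m + 1) x)
    (g := fun x => (b₁ + b₂ + m * ε) * polyaMarginal b₁ b₂ ε m x)
    (G := fun x => polyaMarginal b₁ b₂ ε m x * (b₁ + x * ε))
    (polyaMarginal_succ_succ hT) (ha.trans m.le_succ)
  rw [mul_sum, mul_sum, telescope, sum_Ioc_succ_top ha, polyaMarginal_eq_zero_of_lt m.lt_succ_self]
  ring

lemma polyaMarginal_succ_right_eq {m x : ℕ} (hx : x < m) :
    (x + 1) * (b₂ + (m - x - 1 : ℕ) * ε) * polyaMarginal b₁ b₂ ε m (x + 1) =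
      (m - x : ℕ) * (b₁ + x * ε) * polyaMarginal b₁ b₂ ε m x := by
  obtain ⟨k, rfl⟩ := Nat.exists_eq_add_of_lt hx
  have hchoose : ((x + k + 1).choose (x + 1) : ℚ) * (x + 1) = (x + k + 1).choose x * (k + 1) := by
    exact_mod_cast (show x + k + 1 - x = k + 1 by omega) ▸ Nat.choose_succ_right_eq (x + k + 1) x
  simp only [polyaMarginal, show x + k + 1 - (x + 1) = k by omega,
    show x + k + 1 - x = k + 1 by omega,
    prod_range_succ (fun l : ℕ => b₁ + l * ε) x, prod_range_succ (fun l : ℕ => b₂ + l * ε) k]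
  push_cast
  rw [div_eq_mul_inv, div_eq_mul_inv]
  linear_combination ((∏ l ∈ range x, (b₁ + l * ε)) * (∏ l ∈ range k, (b₂ + l * ε)) *
    (b₁ + x * ε) * (b₂ + k * ε) * (∏ l ∈ range (x + k + 1), (b₁ + b₂ + l * ε))⁻¹) * hchoose

end Polya

lemma urnMarginal_eq_polyaMarginal (δ n x : ℕ) :
    urnMarginal δ n x = polyaMarginal 1 ((δ : ℚ) - 1) ((δ : ℚ) - 2) (n - 1) x := by
  simp only [urnMarginal, polyaMarginal, add_sub_cancel]

lemma Pe1_two_mul_add_one_eq_sum (δ : ℕ) {i : ℕ} (hi : 0 < i) :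
    Pe1 δ (2 * i + 1) = urnMarginal δ (2 * i + 1) (i + 1) +
      ∑ x ∈ Ioc (i + 1) (2 * i), urnMarginal δ (2 * i + 1) x := by
  have hmid : (range (2 * i + 1)).filter (fun x => 2 * x = 2 * i + 1) = ∅ := by
    ext x; simp only [mem_filter, mem_range, notMem_empty, iff_false, not_and]; omega
  have htail : (range (2 * i + 1)).filter (fun x => 2 * x > 2 * i + 1) = Ioc i (2 * i) := by
    ext x; simp only [mem_filter, mem_range, mem_Ioc, gt_iff_lt]; omega
  rw [Pe1, hmid, htail, sum_empty, mul_zero, zero_add,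
    ← insert_Ioc_add_one_left_eq_Ioc (by omega : i < 2 * i), sum_insert (by simp)]

lemma Pe1_two_mul_add_two_eq_sum (δ i : ℕ) :
    Pe1 δ (2 * i + 2) = 1 / 2 * urnMarginal δ (2 * i + 2) (i + 1) +
      ∑ x ∈ Ioc (i + 1) (2 * i + 1), urnMarginal δ (2 * i + 2) x := by
  have hmid : (range (2 * i + 2)).filter (fun x => 2 * x = 2 * i + 2) = {i + 1} := by
    ext x; simp only [mem_filter, mem_range, mem_singleton]; omega
  have htail :
      (range (2 * i + 2)).filter (fun x => 2 * x > 2 * i + 2) = Ioc (i + 1) (2 * i + 1) := by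
    ext x; simp only [mem_filter, mem_range, mem_Ioc, gt_iff_lt]; omega
  rw [Pe1, hmid, htail, sum_singleton]

lemma Pe1_two_mul_add_two_eq (δ : ℕ) (hδ : 2 ≤ δ) {i : ℕ} (hi : 0 < i) :
    Pe1 δ (2 * i + 2) = Pe1 δ (2 * i + 1)
        + (1 / (2 * (i : ℚ))) *
            ((1 + (i : ℚ) * ((δ : ℚ) - 2)) / (2 + (2 * (i : ℚ) + 1) * ((δ : ℚ) - 2))) *
            urnMarginal δ (2 * i + 1) (i + 1) := by
  have hT : ∀ l ≤ 2 * i, 1 + ((δ : ℚ) - 1) + l * ((δ : ℚ) - 2) ≠ 0 := fun l _ => by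
    have : (0 : ℚ) ≤ l * ((δ : ℚ) - 2) := mul_nonneg l.cast_nonneg (by simp [hδ])
    have : (2 : ℚ) ≤ δ := by exact_mod_cast hδ
    linarith
  have tail := polyaMarginal_sum_Ioc_succ hT (a := i + 1) (by omega)
  have step := polyaMarginal_succ_succ hT i
  have ratio := polyaMarginal_succ_right_eq (b₁ := 1) (b₂ := (δ : ℚ) - 1) (ε := (δ : ℚ) - 2)
    (show i < 2 * i by omega)
  rw [show 2 * i - i - 1 = i - 1 by omega, show 2 * i - i = i by omega, Nat.cast_pred hi] at ratio
  rw [Pe1_two_mul_add_one_eq_sum δ hi, Pe1_two_mul_add_two_eq_sum]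
  simp only [urnMarginal_eq_polyaMarginal, show 2 * i + 2 - 1 = 2 * i + 1 by omega,
    Nat.add_sub_cancel]
  have hi' : (i : ℚ) ≠ 0 := by positivity
  have hT' : (2 : ℚ) + (δ - 2) * (2 * i + 1) ≠ 0 := by
    have := hT (2 * i) le_rfl; push_cast at this; contrapose! this; linear_combination this
  field_simp
  push_cast at tail step
  linear_combination (i : ℚ) * step + 2 * (i : ℚ) * tail - ratio

/-- `P_{e1}(2i+2) = P_{e1}(2i+1) + (1/(2i)) · (1+i(δ−2))/(2+(2i+1)(δ−2)) · P(X₁ = i+1 | n = 2i+1)`;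
hence `P_{e1}` strictly increases from each odd `n` to the next even `n` when the added term
is positive. -/
theorem Pe1_even_step (δ : ℕ) (hδ : 2 ≤ δ) (i : ℕ) (hi : 0 < i) :
    Pe1 δ (2 * i + 2) = Pe1 δ (2 * i + 1)
        + (1 / (2 * (i : ℚ))) *
            ((1 + (i : ℚ) * ((δ : ℚ) - 2)) / (2 + (2 * (i : ℚ) + 1) * ((δ : ℚ) - 2))) *
            urnMarginal δ (2 * i + 1) (i + 1) ∧
    (0 < (1 / (2 * (i : ℚ))) *
          ((1 + (i : ℚ) * ((δ : ℚ) - 2)) / (2 + (2 * (i : ℚ) + 1) * ((δ : ℚ) - 2))) *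
          urnMarginal δ (2 * i + 1) (i + 1) →
      Pe1 δ (2 * i + 1) < Pe1 δ (2 * i + 2)) := by
  have key := Pe1_two_mul_add_two_eq δ hδ hi
  exact ⟨key, fun h => key ▸ lt_add_of_pos_right _ h⟩
end
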